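/- arXiv:1706.05495 — 4 statements merged into one kernel-verified Lean document; each statement's English description precedes it below -/
import Mathlib

section
/- Let n ≥ 1, let a = (a_1, ..., a_n)' and σ = (σ_1, ..., σ_n)' be vectors in ℝ^n with associated monic polynomials a(z) = z^n + a_1 z^{n-1} + ... + a_n and σ(z) = z^n + σ_1 z^{n-1} + ... + σ_n, set h = (1, 0, ..., 0)' ∈ ℝ^n, F = J − a h', Γ = J − σ h'. Let P ∈ ℝ^{n×n} be symmetric with h'Ph < 1, set ρ = √(1 − h'Ph), and let g ∈ ℝ^n and k = ρ^{-1}(g − FPh). If the identity σ(z)/a(z) = 1 + h'(zI − F)^{-1} (ρ^{-1} k) holds in the field of real rational functions, then k = ρ(σ − a) and g = ΓPh + σ − a. -/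
open Polynomial Matrix

/-- The monic polynomial `z^n + v 0 * z^(n-1) + ... + v (n-1)`. -/
noncomputable def monicPoly (n : ℕ) (v : Fin n → ℝ) : Polynomial ℝ :=
  Polynomial.X ^ n + ∑ i : Fin n, Polynomial.C (v i) * Polynomial.X ^ (n - 1 - i.val)

/-- A Schur polynomial: all complex roots in the open unit disc. -/
def IsSchur (n : ℕ) (v : Fin n → ℝ) : Prop :=
  ∀ z : ℂ, Polynomial.aeval z (monicPoly n v) = 0 → ‖z‖ < 1

/-- The Toeplitz matrix with entries `c |i-j|`. -/
def toeplitzMat (n : ℕ) (c : Fin (n + 1) → ℝ) : Matrix (Fin (n + 1)) (Fin (n + 1)) ℝ :=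
  Matrix.of fun i j => c ⟨Nat.dist i.val j.val, by
    have hi := i.isLt; have hj := j.isLt
    simp only [Nat.dist]; omega⟩

/-- A positive covariance sequence: the associated Toeplitz matrix is positive definite. -/
def IsPosCovSeq (n : ℕ) (c : Fin (n + 1) → ℝ) : Prop := (toeplitzMat n c).PosDef

/-- `w = ρ σ / a` is a shaping filter for `(c_0, ..., c_n)`:
for each `k = 0,...,n`, `(1/2π) ∫_0^{2π} e^{-ikθ} ρ² |σ(e^{iθ})|²/|a(e^{iθ})|² dθ = c_k`. -/
def IsShapingFilter (n : ℕ) (ρ : ℝ) (σv av : Fin n → ℝ) (c : Fin (n + 1) → ℝ) : Prop :=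
  ∀ k : Fin (n + 1),
    (1 / (2 * Real.pi) : ℂ) *
      ∫ θ in (0:ℝ)..(2 * Real.pi),
        Complex.exp (-(Complex.I * (k.val : ℂ) * (θ : ℂ))) *
          ((ρ : ℂ) ^ 2 *
            ((‖Polynomial.aeval (Complex.exp (Complex.I * (θ : ℂ))) (monicPoly n σv)‖ : ℝ) : ℂ) ^ 2 /
            ((‖Polynomial.aeval (Complex.exp (Complex.I * (θ : ℂ))) (monicPoly n av)‖ : ℝ) : ℂ) ^ 2)
      = ((c k : ℝ) : ℂ)
/-- The vector `h = (1, 0, ..., 0)'`. -/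
def hvec (n : ℕ) : Fin n → ℝ := fun i => if i.val = 0 then 1 else 0

/-- The upward shift matrix `J`. -/
def Jmat (n : ℕ) : Matrix (Fin n) (Fin n) ℝ :=
  Matrix.of fun i j => if j.val = i.val + 1 then 1 else 0

/-- `Γ = J - σ h'`. -/
def GammaMat (n : ℕ) (σv : Fin n → ℝ) : Matrix (Fin n) (Fin n) ℝ :=
  Jmat n - Matrix.vecMulVec σv (hvec n)

/-- The coefficients `u_1, u_2, ...` are defined by the formal power series identity
`(1 + c_1 X + ... + c_n X^n)(1 - u_1 X - u_2 X² - ...) = 1`. -/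
def uSeriesEq (n : ℕ) (c : Fin (n + 1) → ℝ) (u : ℕ → ℝ) : Prop :=
  (PowerSeries.mk fun k => if k = 0 then 1
    else if hk : k ≤ n then c ⟨k, Nat.lt_succ_of_le hk⟩ else 0) *
  (PowerSeries.mk fun k => if k = 0 then 1 else -u k) = 1

/-- The vector `u = (u_1, ..., u_n)'`. -/
def uvec (n : ℕ) (u : ℕ → ℝ) : Fin n → ℝ := fun i => u (i.val + 1)

/-- The lower-triangular Toeplitz matrix `U` with first column `(0, u_1, ..., u_{n-1})'`. -/
def Umat (n : ℕ) (u : ℕ → ℝ) : Matrix (Fin n) (Fin n) ℝ :=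
  Matrix.of fun i j => if j.val < i.val then u (i.val - j.val) else 0

/-- `g(P) = u + Uσ + UΓPh`. -/
def gCEE (n : ℕ) (u : ℕ → ℝ) (σv : Fin n → ℝ) (P : Matrix (Fin n) (Fin n) ℝ) : Fin n → ℝ :=
  uvec n u + (Umat n u).mulVec σv +
    (Umat n u).mulVec ((GammaMat n σv).mulVec (P.mulVec (hvec n)))

/-- The Covariance Extension Equation `P = Γ(P - P h h' P)Γ' + g(P) g(P)'`. -/
def CEE (n : ℕ) (u : ℕ → ℝ) (σv : Fin n → ℝ) (P : Matrix (Fin n) (Fin n) ℝ) : Prop :=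
  P = GammaMat n σv * (P - P * Matrix.vecMulVec (hvec n) (hvec n) * P) * (GammaMat n σv)ᵀ +
      Matrix.vecMulVec (gCEE n u σv P) (gCEE n u σv P)
/-- The matrix `zI - F` over the field `ℝ(z)` of real rational functions. -/
noncomputable def zIF (n : ℕ) (F : Matrix (Fin n) (Fin n) ℝ) :
    Matrix (Fin n) (Fin n) (RatFunc ℝ) :=
  Matrix.diagonal (fun _ => RatFunc.X) - F.map (algebraMap ℝ (RatFunc ℝ))

/-!
For the companion matrix `F = J - a h'`, the row vector `(z^{n-1}, ..., z, 1)` times `zI - F`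
is `a(z) h'`, so `h'(zI - F)⁻¹ q = (q_1 z^{n-1} + ... + q_n) / a(z)`. The hypothesis then reads
`σ(z) = a(z) + (ρ⁻¹k)_1 z^{n-1} + ... + (ρ⁻¹k)_n`, and comparing coefficients gives
`ρ⁻¹k = σ - a`. Substituting into `g = ρk + FPh` and using `ρ² = 1 - h'Ph` gives `g = ΓPh + σ - a`.
-/

noncomputable def tailPoly (n : ℕ) (v : Fin n → ℝ) : ℝ[X] :=
  ∑ i : Fin n, C (v i) * X ^ (n - 1 - i.val)

lemma monicPoly_eq_X_pow_add_tailPoly (n : ℕ) (v : Fin n → ℝ) :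
    monicPoly n v = X ^ n + tailPoly n v := rfl

lemma coeff_tailPoly {n : ℕ} (v : Fin n → ℝ) (t : Fin n) :
    (tailPoly n v).coeff (n - 1 - t.val) = v t := by
  rw [tailPoly, finsetSum_coeff, Finset.sum_eq_single t]
  · rw [coeff_C_mul_X_pow, if_pos rfl]
  · intro i _ hit
    rw [coeff_C_mul_X_pow, if_neg]
    exact fun h => hit (Fin.ext (by omega))
  · exact fun ht => absurd (Finset.mem_univ t) ht

lemma degree_tailPoly_lt (n : ℕ) (v : Fin n → ℝ) : (tailPoly n v).degree < n := by
  rw [degree_lt_iff_coeff_zero]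
  intro m hm
  rw [tailPoly, finsetSum_coeff]
  exact Finset.sum_eq_zero fun i _ => by rw [coeff_C_mul_X_pow, if_neg (by omega)]

lemma monicPoly_monic (n : ℕ) (v : Fin n → ℝ) : (monicPoly n v).Monic :=
  monic_X_pow_add (degree_tailPoly_lt n v)

lemma eq_sub_of_monicPoly_eq_add {n : ℕ} {σv a q : Fin n → ℝ}
    (h : monicPoly n σv = monicPoly n a + tailPoly n q) : q = σv - a := by
  funext t
  have := congrArg (coeff · (n - 1 - t.val)) h
  simp only [monicPoly_eq_X_pow_add_tailPoly, coeff_add, coeff_tailPoly] at this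
  simp only [Pi.sub_apply]
  linarith

lemma sum_pow_mul_C_Jmat {n : ℕ} (j : Fin n) :
    ∑ i : Fin n, (X : ℝ[X]) ^ (n - 1 - i.val) * C (Jmat n i j)
      = if j.val = 0 then 0 else X ^ (n - j.val) := by
  split_ifs with hj
  · exact Finset.sum_eq_zero fun i _ => by simp [Jmat, hj]
  · obtain ⟨t, ht⟩ : ∃ t, j.val = t + 1 := ⟨j.val - 1, by omega⟩
    rw [Finset.sum_eq_single ⟨t, by omega⟩]
    · simp [Jmat, ht]; congr 1; omega
    · intro i _ hi
      have : j.val ≠ i.val + 1 := fun h => hi (Fin.ext (by simp; omega))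
      simp [Jmat, this]
    · simp

lemma vecMul_pow_charmatrix_companion {n : ℕ} (a : Fin n → ℝ) :
    (fun i : Fin n => (X : ℝ[X]) ^ (n - 1 - i.val)) ᵥ*
        charmatrix (Jmat n - vecMulVec a (hvec n))
      = fun j => C (hvec n j) * monicPoly n a := by
  funext j
  have hsplit : ∀ i : Fin n, (X : ℝ[X]) ^ (n - 1 - i.val) *
      charmatrix (Jmat n - vecMulVec a (hvec n)) i j
      = X ^ (n - 1 - i.val) * diagonal (fun _ => X) i j - X ^ (n - 1 - i.val) * C (Jmat n i j)
        + C (hvec n j) * (C (a i) * X ^ (n - 1 - i.val)) := by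
    intro i
    simp only [charmatrix_apply, Matrix.sub_apply, vecMulVec_apply, C_sub, C_mul]
    ring
  simp only [vecMul, dotProduct, hsplit, Finset.sum_add_distrib, Finset.sum_sub_distrib,
    ← Finset.mul_sum, sum_pow_mul_C_Jmat, diagonal_apply, mul_ite, mul_zero,
    Finset.sum_ite_eq', Finset.mem_univ, if_true]
  rw [← tailPoly, monicPoly_eq_X_pow_add_tailPoly, ← pow_succ]
  by_cases hj : j.val = 0
  · simp [hj, hvec, show n - 1 + 1 = n by have := j.isLt; omega]
  · simp [hj, hvec, show n - 1 - j.val + 1 = n - j.val by have := j.isLt; omega]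

lemma zIF_eq_map_charmatrix (n : ℕ) (F : Matrix (Fin n) (Fin n) ℝ) :
    zIF n F = (charmatrix F).map (algebraMap ℝ[X] (RatFunc ℝ)) := by
  ext i j
  simp [zIF, charmatrix_apply, diagonal, RatFunc.algebraMap_C, apply_ite (algebraMap ℝ[X] _)]

lemma isUnit_det_zIF (n : ℕ) (F : Matrix (Fin n) (Fin n) ℝ) : IsUnit (zIF n F).det := by
  rw [zIF_eq_map_charmatrix, ← RingHom.mapMatrix_apply, ← RingHom.map_det]
  exact (RatFunc.algebraMap_ne_zero F.charpoly_monic.ne_zero).isUnit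

lemma hvec_vecMul_inv_zIF {n : ℕ} (a : Fin n → ℝ) :
    (fun i => algebraMap ℝ (RatFunc ℝ) (hvec n i)) ᵥ* (zIF n (Jmat n - vecMulVec a (hvec n)))⁻¹
      = fun i => algebraMap ℝ[X] (RatFunc ℝ) (X ^ (n - 1 - i.val)) /
          algebraMap ℝ[X] (RatFunc ℝ) (monicPoly n a) := by
  set f := algebraMap ℝ[X] (RatFunc ℝ)
  have hA : f (monicPoly n a) ≠ 0 := RatFunc.algebraMap_ne_zero (monicPoly_monic n a).ne_zero
  have hrow : (fun i : Fin n => f (X ^ (n - 1 - i.val)) / f (monicPoly n a)) ᵥ*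
      zIF n (Jmat n - vecMulVec a (hvec n)) = fun i => algebraMap ℝ (RatFunc ℝ) (hvec n i) := by
    have hscale : (fun i : Fin n => f (X ^ (n - 1 - i.val)) / f (monicPoly n a))
        = (f (monicPoly n a))⁻¹ • (f ∘ fun i : Fin n => (X : ℝ[X]) ^ (n - 1 - i.val)) := by
      funext i; simp [div_eq_inv_mul]
    funext j
    rw [hscale, smul_vecMul, zIF_eq_map_charmatrix, Pi.smul_apply, ← RingHom.map_vecMul,
      vecMul_pow_charmatrix_companion, map_mul, smul_eq_mul, mul_comm (f (C _)),
      inv_mul_cancel_left₀ hA, ← algebraMap_eq, ← IsScalarTower.algebraMap_apply]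
  rw [← hrow, vecMul_vecMul, mul_nonsing_inv _ (isUnit_det_zIF _ _), vecMul_one]

lemma hvec_dotProduct_inv_zIF_mulVec {n : ℕ} (a q : Fin n → ℝ) :
    (fun i => algebraMap ℝ (RatFunc ℝ) (hvec n i)) ⬝ᵥ
        (zIF n (Jmat n - vecMulVec a (hvec n)))⁻¹ *ᵥ (fun i => algebraMap ℝ (RatFunc ℝ) (q i))
      = algebraMap ℝ[X] (RatFunc ℝ) (tailPoly n q) /
          algebraMap ℝ[X] (RatFunc ℝ) (monicPoly n a) := by
  rw [dotProduct_mulVec, hvec_vecMul_inv_zIF, tailPoly, map_sum, Finset.sum_div]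
  refine Finset.sum_congr rfl fun i _ => ?_
  rw [map_mul, ← algebraMap_eq, ← IsScalarTower.algebraMap_apply]
  ring

lemma monicPoly_eq_add_tailPoly_of_div_eq {n : ℕ} {σv a q : Fin n → ℝ}
    (h : algebraMap ℝ[X] (RatFunc ℝ) (monicPoly n σv) / algebraMap ℝ[X] (RatFunc ℝ) (monicPoly n a)
      = 1 + algebraMap ℝ[X] (RatFunc ℝ) (tailPoly n q) /
          algebraMap ℝ[X] (RatFunc ℝ) (monicPoly n a)) :
    monicPoly n σv = monicPoly n a + tailPoly n q := by
  have hA : algebraMap ℝ[X] (RatFunc ℝ) (monicPoly n a) ≠ 0 :=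
    RatFunc.algebraMap_ne_zero (monicPoly_monic n a).ne_zero
  apply RatFunc.algebraMap_injective
  rw [map_add]
  field_simp at h
  linear_combination h

theorem stmt10_general (n : ℕ) (a σv g : Fin n → ℝ)
    (P : Matrix (Fin n) (Fin n) ℝ)
    (hPh : hvec n ⬝ᵥ P.mulVec (hvec n) < 1)
    (ρ : ℝ) (hρ : ρ = Real.sqrt (1 - hvec n ⬝ᵥ P.mulVec (hvec n)))
    (k : Fin n → ℝ)
    (hk : k = ρ⁻¹ • (g - (Jmat n - Matrix.vecMulVec a (hvec n)).mulVec (P.mulVec (hvec n))))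
    (hid : algebraMap (Polynomial ℝ) (RatFunc ℝ) (monicPoly n σv) /
        algebraMap (Polynomial ℝ) (RatFunc ℝ) (monicPoly n a) =
      1 + ((fun i => algebraMap ℝ (RatFunc ℝ) (hvec n i)) ⬝ᵥ
        (zIF n (Jmat n - Matrix.vecMulVec a (hvec n)))⁻¹.mulVec
          (fun i => algebraMap ℝ (RatFunc ℝ) ((ρ⁻¹ • k) i)))) :
    k = ρ • (σv - a) ∧ g = (GammaMat n σv).mulVec (P.mulVec (hvec n)) + σv - a := by
  have hρ0 : ρ ≠ 0 := by rw [hρ]; exact (Real.sqrt_pos.2 (by linarith)).ne'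
  have hρ2 : ρ ^ 2 = 1 - hvec n ⬝ᵥ P *ᵥ hvec n := by rw [hρ, Real.sq_sqrt (by linarith)]
  rw [hvec_dotProduct_inv_zIF_mulVec] at hid
  have hq : ρ⁻¹ • k = σv - a := eq_sub_of_monicPoly_eq_add (monicPoly_eq_add_tailPoly_of_div_eq hid)
  have hk_eq : k = ρ • (σv - a) := by rw [← hq, smul_inv_smul₀ hρ0]
  refine ⟨hk_eq, ?_⟩
  have hg : g = ρ • k + (Jmat n - vecMulVec a (hvec n)) *ᵥ P *ᵥ hvec n := by
    rw [hk, smul_inv_smul₀ hρ0]; abel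
  rw [hg, hk_eq, GammaMat, sub_mulVec, sub_mulVec, vecMulVec_mulVec, vecMulVec_mulVec]
  simp only [op_smul_eq_smul]
  linear_combination (norm := module) hρ2 • (σv - a)

/-- With `F = J - a h'`, `Γ = J - σ h'`, `P` symmetric with `h'Ph < 1`,
`ρ = √(1 - h'Ph)` and `k = ρ⁻¹(g - FPh)`, if `σ(z)/a(z) = 1 + h'(zI - F)⁻¹(ρ⁻¹k)` in `ℝ(z)`,
then `k = ρ(σ - a)` and `g = ΓPh + σ - a`. -/
theorem stmt10 (n : ℕ) (hn : 1 ≤ n) (a σv g : Fin n → ℝ)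
    (P : Matrix (Fin n) (Fin n) ℝ) (hPsymm : P.IsSymm)
    (hPh : hvec n ⬝ᵥ P.mulVec (hvec n) < 1)
    (ρ : ℝ) (hρ : ρ = Real.sqrt (1 - hvec n ⬝ᵥ P.mulVec (hvec n)))
    (k : Fin n → ℝ)
    (hk : k = ρ⁻¹ • (g - (Jmat n - Matrix.vecMulVec a (hvec n)).mulVec (P.mulVec (hvec n))))
    (hid : algebraMap (Polynomial ℝ) (RatFunc ℝ) (monicPoly n σv) /
        algebraMap (Polynomial ℝ) (RatFunc ℝ) (monicPoly n a) =
      1 + ((fun i => algebraMap ℝ (RatFunc ℝ) (hvec n i)) ⬝ᵥ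
        (zIF n (Jmat n - Matrix.vecMulVec a (hvec n)))⁻¹.mulVec
          (fun i => algebraMap ℝ (RatFunc ℝ) ((ρ⁻¹ • k) i)))) :
    k = ρ • (σv - a) ∧ g = (GammaMat n σv).mulVec (P.mulVec (hvec n)) + σv - a :=
  stmt10_general n a σv g P hPh ρ hρ k hk hid
end

section
/- Let n ≥ 1, let P ∈ ℝ^{n×n} be symmetric, g ∈ ℝ^n, h = (1, 0, ..., 0)' ∈ ℝ^n, and F ∈ ℝ^{n×n}, and assume ρ² := 1 − h'Ph > 0. Set ρ = √(1 − h'Ph), k = ρ^{-1}(g − FPh), and Γ = F − ρ^{-1} k h'. If P satisfies the algebraic Riccati equation P = FPF' + (g − FPh)(1 − h'Ph)^{-1}(g − FPh)', then P also satisfies P = Γ(P − P h h' P)Γ' + g g'. -/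
/-!
Write `p = Ph`, `t = h'p`, `s = 1 - t` and `u = g - Fp`, so that `Γ = F - s⁻¹ u h'`.
Expanding the rank-one perturbation gives
`Γ(P - pp')Γ' = FPF' - (Fp)(Fp)' - (Fp)u' - u(Fp)' + s⁻¹t uu'`,
and adding `gg' = (u + Fp)(u + Fp)'` leaves `FPF' + (1 + s⁻¹t) uu' = FPF' + s⁻¹ uu'`,
which is `P` by the Riccati equation.
-/

open Matrix

namespace Matrix

variable {ι : Type*} [Fintype ι]

theorem IsSymm.mul_vecMulVec_mul {R : Type*} [CommSemiring R] {P : Matrix ι ι R} (hP : P.IsSymm)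
    (x y : ι → R) : P * vecMulVec x y * P = vecMulVec (P *ᵥ x) (P *ᵥ y) := by
  rw [mul_vecMulVec, vecMulVec_mul, ← mulVec_transpose, hP.eq]

theorem sub_vecMulVec_mul_mul_transpose {R : Type*} [CommRing R] (F Q : Matrix ι ι R)
    (c h : ι → R) :
    (F - vecMulVec c h) * Q * (F - vecMulVec c h)ᵀ =
      F * Q * Fᵀ - vecMulVec (F *ᵥ Q *ᵥ h) c - vecMulVec c (F *ᵥ Qᵀ *ᵥ h) +
        (h ⬝ᵥ Q *ᵥ h) • vecMulVec c c := by
  simp only [sub_mul, mul_sub, transpose_sub, transpose_vecMulVec, mul_vecMulVec, vecMulVec_mul,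
    vecMulVec_mulVec, op_smul_eq_smul, ← mulVec_mulVec, vecMul_transpose, mulVec_transpose,
    dotProduct_mulVec, smul_vecMulVec]
  abel

theorem IsSymm.riccati_closedLoop_form {K : Type*} [Field K] {P : Matrix ι ι K} (hP : P.IsSymm)
    (F : Matrix ι ι K) (g h : ι → K) (hs : 1 - h ⬝ᵥ P *ᵥ h ≠ 0)
    (hric : P = F * P * Fᵀ + (1 - h ⬝ᵥ P *ᵥ h)⁻¹ •
      vecMulVec (g - F *ᵥ P *ᵥ h) (g - F *ᵥ P *ᵥ h)) :
    P = (F - vecMulVec ((1 - h ⬝ᵥ P *ᵥ h)⁻¹ • (g - F *ᵥ P *ᵥ h)) h) *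
        (P - P * vecMulVec h h * P) *
        (F - vecMulVec ((1 - h ⬝ᵥ P *ᵥ h)⁻¹ • (g - F *ᵥ P *ᵥ h)) h)ᵀ + vecMulVec g g := by
  set p := P *ᵥ h
  set s := 1 - h ⬝ᵥ p
  set u := g - F *ᵥ p with hu
  have hQ : P - P * vecMulVec h h * P = P - vecMulVec p p := by rw [hP.mul_vecMulVec_mul]
  have hQt : (P - vecMulVec p p)ᵀ = P - vecMulVec p p := by
    rw [transpose_sub, transpose_vecMulVec, hP.eq]
  have hQh : (P - vecMulVec p p) *ᵥ h = s • p := by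
    rw [sub_mulVec, vecMulVec_mulVec, op_smul_eq_smul, dotProduct_comm, sub_smul, one_smul]
  have hFQF : F * (P - vecMulVec p p) * Fᵀ = F * P * Fᵀ - vecMulVec (F *ᵥ p) (F *ᵥ p) := by
    rw [mul_sub, sub_mul, mul_vecMulVec, vecMulVec_mul, vecMul_transpose]
  have hg : g = u + F *ᵥ p := by rw [hu, sub_add_cancel]
  rw [hQ, sub_vecMulVec_mul_mul_transpose, hQt, hQh, hFQF, dotProduct_smul, mulVec_smul]
  conv_lhs => rw [hric]
  rw [hg]
  simp only [smul_vecMulVec, vecMulVec_smul, add_vecMulVec, vecMulVec_add, smul_smul, smul_eq_mul]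
  match_scalars <;> field_simp <;> ring

end Matrix

theorem stmt11_general (n : ℕ)
    (P F : Matrix (Fin n) (Fin n) ℝ) (g : Fin n → ℝ) (hPsymm : P.IsSymm)
    (hpos : 0 < 1 - hvec n ⬝ᵥ P.mulVec (hvec n))
    (ρ : ℝ) (hρ : ρ = Real.sqrt (1 - hvec n ⬝ᵥ P.mulVec (hvec n)))
    (k : Fin n → ℝ) (hk : k = ρ⁻¹ • (g - F.mulVec (P.mulVec (hvec n))))
    (Γ : Matrix (Fin n) (Fin n) ℝ) (hΓ : Γ = F - Matrix.vecMulVec (ρ⁻¹ • k) (hvec n))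
    (hric : P = F * P * Fᵀ + (1 - hvec n ⬝ᵥ P.mulVec (hvec n))⁻¹ •
      Matrix.vecMulVec (g - F.mulVec (P.mulVec (hvec n))) (g - F.mulVec (P.mulVec (hvec n)))) :
    P = Γ * (P - P * Matrix.vecMulVec (hvec n) (hvec n) * P) * Γᵀ +
        Matrix.vecMulVec g g := by
  have hρρ : ρ * ρ = 1 - hvec n ⬝ᵥ P *ᵥ hvec n := by
    rw [hρ, Real.mul_self_sqrt hpos.le]
  have hgain : ρ⁻¹ • k = (1 - hvec n ⬝ᵥ P *ᵥ hvec n)⁻¹ • (g - F *ᵥ P *ᵥ hvec n) := by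
    rw [hk, smul_smul, ← mul_inv, hρρ]
  rw [hΓ, hgain]
  exact hPsymm.riccati_closedLoop_form F g (hvec n) hpos.ne' hric

/-- If `P` is symmetric with `1 - h'Ph > 0` and satisfies the algebraic
Riccati equation `P = FPF' + (g - FPh)(1 - h'Ph)⁻¹(g - FPh)'`, then with
`ρ = √(1 - h'Ph)`, `k = ρ⁻¹(g - FPh)` and `Γ = F - ρ⁻¹ k h'`, `P` also satisfies
`P = Γ(P - P h h' P)Γ' + g g'`. -/
theorem stmt11 (n : ℕ) (hn : 1 ≤ n)
    (P F : Matrix (Fin n) (Fin n) ℝ) (g : Fin n → ℝ) (hPsymm : P.IsSymm)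
    (hpos : 0 < 1 - hvec n ⬝ᵥ P.mulVec (hvec n))
    (ρ : ℝ) (hρ : ρ = Real.sqrt (1 - hvec n ⬝ᵥ P.mulVec (hvec n)))
    (k : Fin n → ℝ) (hk : k = ρ⁻¹ • (g - F.mulVec (P.mulVec (hvec n))))
    (Γ : Matrix (Fin n) (Fin n) ℝ) (hΓ : Γ = F - Matrix.vecMulVec (ρ⁻¹ • k) (hvec n))
    (hric : P = F * P * Fᵀ + (1 - hvec n ⬝ᵥ P.mulVec (hvec n))⁻¹ •
      Matrix.vecMulVec (g - F.mulVec (P.mulVec (hvec n))) (g - F.mulVec (P.mulVec (hvec n)))) :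
    P = Γ * (P - P * Matrix.vecMulVec (hvec n) (hvec n) * P) * Γᵀ +
        Matrix.vecMulVec g g :=
  stmt11_general n P F g hPsymm hpos ρ hρ k hk Γ hΓ hric
end

section
/- Let n ≥ 1, let σ(z) = z^n + σ_1 z^{n-1} + ... + σ_n and a(z) = z^n + a_1 z^{n-1} + ... + a_n be Schur polynomials, let ρ > 0, and let b(z) = z^n + b_1 z^{n-1} + ... + b_n be a monic real polynomial satisfying the identity a(z) b*(z) + b(z) a*(z) = 2ρ² σ(z) σ*(z) in ℝ[z], where p*(z) := z^n p(1/z) denotes the reversed polynomial of a polynomial p of degree n. Then b(z) is a Schur polynomial, and the rational function f = b/(2a) satisfies Re f(z) > 0 for all complex z with |z| ≥ 1; in particular f is positive real. -/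
/-!
On the unit circle the identity `a b* + b a* = 2ρ² σ σ*` reads
`2 Re (b(w) conj a(w)) = 2ρ² |σ(w)|²`, so `Re (b/a) = ρ² |σ|² / |a|² > 0` there.
Since `b(z)/a(z) = b*(z⁻¹)/a*(z⁻¹)` and `a*` has no zeros in the closed unit disc (`a` is Schur),
`g = b*/a*` is holomorphic on the disc and continuous up to the circle; the maximum modulus
principle for `exp (-g)` puts the minimum of `Re g` over the closed disc on the circle, where it is
positive. Hence `Re (b/a) > 0` on `|z| ≥ 1`, which also rules out zeros of `b` there.
-/

open Polynomial Matrix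

open ComplexConjugate Metric

lemma natDegree_monicPoly_le (n : ℕ) (v : Fin n → ℝ) : (monicPoly n v).natDegree ≤ n := by
  refine (natDegree_add_le _ _).trans (max_le (natDegree_X_pow_le n) ?_)
  refine natDegree_sum_le_of_forall_le _ _ fun i _ => natDegree_C_mul_X_pow_le _ _ |>.trans ?_
  omega

lemma coeff_monicPoly_self (n : ℕ) (v : Fin n → ℝ) : (monicPoly n v).coeff n = 1 := by
  have hterm (i : Fin n) : (C (v i) * X ^ (n - 1 - i.val)).coeff n = 0 := by
    rw [coeff_C_mul_X_pow, if_neg (by omega)]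
  simp only [monicPoly, coeff_add, coeff_X_pow_self, finsetSum_coeff, hterm,
    Finset.sum_const_zero, add_zero]

section Reflect

variable {n : ℕ} {p q : ℝ[X]}

lemma aeval_eq_pow_mul_aeval_reflect (hp : p.natDegree ≤ n) {z : ℂ} (hz : z ≠ 0) :
    aeval z p = z ^ n * aeval z⁻¹ (reflect n p) := by
  let _ := invertibleOfNonzero hz
  have h := eval₂_reflect_mul_pow (algebraMap ℝ ℂ) z n p hp
  rw [invOf_eq_inv] at h
  rw [aeval_def, aeval_def, ← h, mul_comm]

lemma aeval_reflect_eq_pow_mul_conj (hp : p.natDegree ≤ n) {w : ℂ} (hw : ‖w‖ = 1) :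
    aeval w (reflect n p) = w ^ n * conj (aeval w p) := by
  have hw0 : w ≠ 0 := norm_ne_zero_iff.mp (by rw [hw]; exact one_ne_zero)
  rw [← aeval_conj, ← Complex.inv_eq_conj hw, aeval_eq_pow_mul_aeval_reflect hp (inv_ne_zero hw0),
    inv_inv, ← mul_assoc, ← mul_pow, mul_inv_cancel₀ hw0, one_pow, one_mul]

lemma aeval_reflect_ne_zero (hp : p.natDegree ≤ n) (hlead : p.coeff n ≠ 0)
    (hroots : ∀ z : ℂ, aeval z p = 0 → ‖z‖ < 1) {w : ℂ} (hw : ‖w‖ ≤ 1) :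
    aeval w (reflect n p) ≠ 0 := by
  rcases eq_or_ne w 0 with rfl | hw0
  · rw [← coeff_zero_eq_aeval_zero', coeff_reflect, revAt_le (Nat.zero_le n), Nat.sub_zero]
    exact (_root_.map_ne_zero _).mpr hlead
  · intro h
    have hroot := hroots w⁻¹ (by
      rw [aeval_eq_pow_mul_aeval_reflect hp (inv_ne_zero hw0), inv_inv, h, mul_zero])
    rw [norm_inv, inv_lt_one_iff₀] at hroot
    rcases hroot with hroot | hroot
    · exact hw0 (norm_le_zero_iff.mp hroot)
    · exact hw.not_gt hroot

lemma aeval_div_aeval_eq_reflect (hp : p.natDegree ≤ n) (hq : q.natDegree ≤ n) {z : ℂ}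
    (hz : z ≠ 0) :
    aeval z p / aeval z q = aeval z⁻¹ (reflect n p) / aeval z⁻¹ (reflect n q) := by
  rw [aeval_eq_pow_mul_aeval_reflect hp hz, aeval_eq_pow_mul_aeval_reflect hq hz,
    mul_div_mul_left _ _ (pow_ne_zero n hz)]

lemma re_aeval_mul_conj_eq_of_add_reflect_eq {a b s : ℝ[X]} (ha : a.natDegree ≤ n)
    (hb : b.natDegree ≤ n) (hs : s.natDegree ≤ n) {c : ℝ}
    (hid : a * reflect n b + b * reflect n a = C (2 * c) * (s * reflect n s))
    {w : ℂ} (hw : ‖w‖ = 1) :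
    (aeval w b * conj (aeval w a)).re = c * Complex.normSq (aeval w s) := by
  have hw0 : w ^ n ≠ 0 := pow_ne_zero n (norm_ne_zero_iff.mp (by rw [hw]; exact one_ne_zero))
  have h := congrArg (aeval w) hid
  simp only [map_add, map_mul, aeval_C, Complex.coe_algebraMap,
    Complex.ofReal_ofNat, aeval_reflect_eq_pow_mul_conj ha hw,
    aeval_reflect_eq_pow_mul_conj hb hw, aeval_reflect_eq_pow_mul_conj hs hw] at h
  have h' : (aeval w b * conj (aeval w a)) + conj (aeval w b * conj (aeval w a)) =
      2 * c * (aeval w s * conj (aeval w s)) := by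
    apply mul_right_cancel₀ hw0
    simp only [map_mul, Complex.conj_conj]
    linear_combination h
  rw [Complex.add_conj, Complex.mul_conj] at h'
  norm_cast at h'
  linarith

lemma re_aeval_div_pos_of_add_reflect_eq {a b s : ℝ[X]} (ha : a.natDegree ≤ n)
    (hb : b.natDegree ≤ n) (hs : s.natDegree ≤ n) {c : ℝ} (hc : 0 < c)
    (hid : a * reflect n b + b * reflect n a = C (2 * c) * (s * reflect n s))
    {w : ℂ} (hw : ‖w‖ = 1) (ha0 : aeval w a ≠ 0) (hs0 : aeval w s ≠ 0) :
    0 < (aeval w b / aeval w a).re := by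
  have hre (z u : ℂ) : (z / u).re = (z * conj u).re / Complex.normSq u := by
    rw [Complex.div_re, Complex.mul_re, Complex.conj_re, Complex.conj_im]
    ring
  rw [hre, re_aeval_mul_conj_eq_of_add_reflect_eq ha hb hs hid hw]
  have := Complex.normSq_pos.mpr ha0
  have := Complex.normSq_pos.mpr hs0
  positivity

end Reflect

section IsSchur

variable {n : ℕ} {v : Fin n → ℝ}

lemma IsSchur.aeval_ne_zero (hv : IsSchur n v) {z : ℂ} (hz : 1 ≤ ‖z‖) :
    aeval z (monicPoly n v) ≠ 0 :=
  fun h => (hv z h).not_ge hz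

lemma IsSchur.aeval_reflect_ne_zero (hv : IsSchur n v) {w : ℂ} (hw : ‖w‖ ≤ 1) :
    aeval w (reflect n (monicPoly n v)) ≠ 0 :=
  _root_.aeval_reflect_ne_zero (natDegree_monicPoly_le n v) (by simp [coeff_monicPoly_self]) hv hw

end IsSchur

lemma DiffContOnCl.re_pos_of_forall_mem_frontier {g : ℂ → ℂ} {U : Set ℂ}
    (hU : Bornology.IsBounded U) (hne : U.Nonempty) (hg : DiffContOnCl ℂ g U)
    (hpos : ∀ w ∈ frontier U, 0 < (g w).re) {z : ℂ} (hz : z ∈ closure U) : 0 < (g z).re := by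
  have hexp : DiffContOnCl ℂ (fun w => Complex.exp (-g w)) U :=
    ⟨hg.1.neg.cexp, hg.2.neg.cexp⟩
  obtain ⟨w, hw, hmax⟩ := Complex.exists_mem_frontier_isMaxOn_norm hU hne hexp
  have hle : ‖Complex.exp (-g z)‖ ≤ ‖Complex.exp (-g w)‖ := hmax hz
  simp only [Complex.norm_exp, Complex.neg_re, Real.exp_le_exp, neg_le_neg_iff] at hle
  exact (hpos w hw).trans_le hle

lemma re_aeval_div_pos_of_one_le_norm {n : ℕ} {p q : ℝ[X]} (hp : p.natDegree ≤ n)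
    (hq : q.natDegree ≤ n) (hq_refl : ∀ w : ℂ, ‖w‖ ≤ 1 → aeval w (reflect n q) ≠ 0)
    (hbd : ∀ w : ℂ, ‖w‖ = 1 → 0 < (aeval w p / aeval w q).re) {z : ℂ} (hz : 1 ≤ ‖z‖) :
    0 < (aeval z p / aeval z q).re := by
  have hz0 : z ≠ 0 := norm_pos_iff.mp (one_pos.trans_le hz)
  have hg : DiffContOnCl ℂ (fun w : ℂ => aeval w (reflect n p) / aeval w (reflect n q))
      (ball (0 : ℂ) 1) := by
    refine DifferentiableOn.diffContOnCl fun w hw => ?_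
    rw [closure_ball _ one_ne_zero, mem_closedBall_zero_iff] at hw
    exact ((Polynomial.differentiable_aeval _ w).div (Polynomial.differentiable_aeval _ w)
      (hq_refl w hw)).differentiableWithinAt
  rw [aeval_div_aeval_eq_reflect hp hq hz0]
  refine hg.re_pos_of_forall_mem_frontier isBounded_ball ⟨0, mem_ball_self one_pos⟩ ?_ ?_
  · rw [frontier_ball _ one_ne_zero]
    intro w hw
    rw [mem_sphere_zero_iff_norm] at hw
    have hw0 : w ≠ 0 := norm_ne_zero_iff.mp (by rw [hw]; exact one_ne_zero)
    simpa [aeval_div_aeval_eq_reflect hp hq (inv_ne_zero hw0)] using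
      hbd w⁻¹ (by rw [norm_inv, hw, inv_one])
  · rw [closure_ball _ one_ne_zero, mem_closedBall_zero_iff, norm_inv]
    exact inv_le_one_of_one_le₀ hz

theorem stmt14_general (n : ℕ) (σv av bv : Fin n → ℝ)
    (hσ : IsSchur n σv) (ha : IsSchur n av) (ρ : ℝ) (hρ : 0 < ρ)
    (hid : monicPoly n av * Polynomial.reflect n (monicPoly n bv) +
        monicPoly n bv * Polynomial.reflect n (monicPoly n av)
      = Polynomial.C (2 * ρ ^ 2) *
          (monicPoly n σv * Polynomial.reflect n (monicPoly n σv))) :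
    IsSchur n bv ∧
    (∀ z : ℂ, 1 ≤ ‖z‖ →
      0 < (Polynomial.aeval z (monicPoly n bv) /
            (2 * Polynomial.aeval z (monicPoly n av))).re) ∧
    (∀ z : ℂ, 1 < ‖z‖ →
      Polynomial.aeval z (monicPoly n av) ≠ 0 ∧
      0 ≤ (Polynomial.aeval z (monicPoly n bv) /
            (2 * Polynomial.aeval z (monicPoly n av))).re) := by
  have hdeg := natDegree_monicPoly_le n
  have hbd (w : ℂ) (hw : ‖w‖ = 1) :
      0 < (aeval w (monicPoly n bv) / aeval w (monicPoly n av)).re :=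
    re_aeval_div_pos_of_add_reflect_eq (hdeg av) (hdeg bv) (hdeg σv) (pow_pos hρ 2) hid hw
      (ha.aeval_ne_zero hw.ge) (hσ.aeval_ne_zero hw.ge)
  have hpos (z : ℂ) (hz : 1 ≤ ‖z‖) :
      0 < (aeval z (monicPoly n bv) / (2 * aeval z (monicPoly n av))).re := by
    rw [div_mul_eq_div_div_swap, Complex.div_ofNat_re]
    exact half_pos <| re_aeval_div_pos_of_one_le_norm (hdeg bv) (hdeg av)
      (fun _ => ha.aeval_reflect_ne_zero) hbd hz
  refine ⟨fun z hz => ?_, hpos, fun z hz => ⟨ha.aeval_ne_zero hz.le, (hpos z hz.le).le⟩⟩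
  by_contra! hz1
  simpa [hz] using hpos z hz1

/-- If `σ(z)` and `a(z)` are Schur, `ρ > 0`, and the monic polynomial `b(z)`
satisfies `a(z)b*(z) + b(z)a*(z) = 2ρ² σ(z)σ*(z)` in `ℝ[z]` (where `p*(z) = zⁿ p(1/z)` is the
reversed polynomial), then `b(z)` is Schur and `f = b/(2a)` satisfies `Re f(z) > 0` for all
`|z| ≥ 1`; in particular `f` is positive real. -/
theorem stmt14 (n : ℕ) (hn : 1 ≤ n) (σv av bv : Fin n → ℝ)
    (hσ : IsSchur n σv) (ha : IsSchur n av) (ρ : ℝ) (hρ : 0 < ρ)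
    (hid : monicPoly n av * Polynomial.reflect n (monicPoly n bv) +
        monicPoly n bv * Polynomial.reflect n (monicPoly n av)
      = Polynomial.C (2 * ρ ^ 2) *
          (monicPoly n σv * Polynomial.reflect n (monicPoly n σv))) :
    IsSchur n bv ∧
    (∀ z : ℂ, 1 ≤ ‖z‖ →
      0 < (Polynomial.aeval z (monicPoly n bv) /
            (2 * Polynomial.aeval z (monicPoly n av))).re) ∧
    (∀ z : ℂ, 1 < ‖z‖ →
      Polynomial.aeval z (monicPoly n av) ≠ 0 ∧
      0 ≤ (Polynomial.aeval z (monicPoly n bv) /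
            (2 * Polynomial.aeval z (monicPoly n av))).re) :=
  stmt14_general n σv av bv hσ ha ρ hρ hid
end

section
/- Let n ≥ 1 and let T be an (n+1)×(n+1) complex matrix such that I + T is invertible. Define the vector u ∈ ℂ^n and the matrix U ∈ ℂ^{n×n} by [u U] = [0 I_n](I_{n+1} + T)^{-1}T, i.e., u is the first column and U the remaining n×n block of the n×(n+1) matrix obtained by deleting the first row of (I + T)^{-1}T. Let σ, a, g ∈ ℂ^n, P ∈ ℂ^{n×n}, h = (1, 0, ..., 0)' ∈ ℂ^n, and Γ = J − σ h' with J the n×n upward shift matrix. If (0, g_1, ..., g_n)' = T·(1, a_1, ..., a_n)' and g = ΓPh + σ − a, then g = u + Uσ + UΓPh and a = (I − U)(ΓPh + σ) − u. -/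
/-!
With `M = (I + T)⁻¹` one has `M T = I - M`. The hypotheses say `(I + T)(1, a) = (1, w)` for
`w = ΓPh + σ`, so `M T (1, w) = (1, w) - (1, a) = (0, g)`; the last `n` rows of this identity read
`g = u + U w`, and `a = w - g` gives the second formula.
-/

open Matrix

namespace Matrix

variable {ι R : Type*} [Fintype ι] [DecidableEq ι] [CommRing R]

theorem inv_one_add_mul_self {T : Matrix ι ι R} (hT : IsUnit (1 + T)) :
    (1 + T)⁻¹ * T = 1 - (1 + T)⁻¹ := by
  rw [eq_sub_iff_add_eq, ← mul_add_one, add_comm T,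
    nonsing_inv_mul _ ((isUnit_iff_isUnit_det _).mp hT)]

theorem inv_one_add_mul_self_mulVec {T : Matrix ι ι R} (hT : IsUnit (1 + T)) {x y : ι → R}
    (hxy : (1 + T) *ᵥ x = y) : ((1 + T)⁻¹ * T) *ᵥ y = y - x := by
  rw [inv_one_add_mul_self hT, sub_mulVec, one_mulVec, ← hxy, mulVec_mulVec,
    nonsing_inv_mul _ ((isUnit_iff_isUnit_det _).mp hT), one_mulVec]

theorem mulVec_cons_succ {n : ℕ} (A : Matrix (Fin (n + 1)) (Fin (n + 1)) R) (x : R)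
    (v : Fin n → R) (i : Fin n) :
    (A *ᵥ Fin.cons x v) i.succ = A i.succ 0 * x + (A.submatrix Fin.succ Fin.succ *ᵥ v) i := by
  simp [mulVec, dotProduct, Fin.sum_univ_succ]

end Matrix

theorem stmt16_general (n : ℕ)
    (T : Matrix (Fin (n + 1)) (Fin (n + 1)) ℂ) (hT : IsUnit (1 + T))
    (u : Fin n → ℂ) (U : Matrix (Fin n) (Fin n) ℂ)
    (hu : u = fun i => ((1 + T)⁻¹ * T) i.succ 0)
    (hU : U = Matrix.of fun i j => ((1 + T)⁻¹ * T) i.succ j.succ)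
    (σv a g : Fin n → ℂ) (P : Matrix (Fin n) (Fin n) ℂ)
    (h : Fin n → ℂ)
    (Γ : Matrix (Fin n) (Fin n) ℂ)
    (h1 : (Fin.cons 0 g : Fin (n + 1) → ℂ) = T.mulVec (Fin.cons 1 a))
    (h2 : g = Γ.mulVec (P.mulVec h) + σv - a) :
    g = u + U.mulVec σv + U.mulVec (Γ.mulVec (P.mulVec h)) ∧
    a = (1 - U).mulVec (Γ.mulVec (P.mulVec h) + σv) - u := by
  set w := Γ *ᵥ (P *ᵥ h) + σv
  have hsolve : (1 + T) *ᵥ Fin.cons 1 a = Fin.cons 1 w := by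
    rw [add_mulVec, one_mulVec, ← h1, h2]
    exact (cons_add_cons _ _ _ _).trans (by rw [add_zero, add_sub_cancel]; rfl)
  have hgw : g = u + U *ᵥ w := by
    funext i
    have hrow := congrFun (inv_one_add_mul_self_mulVec hT hsolve) i.succ
    rw [mulVec_cons_succ, mul_one] at hrow
    simp only [hu, hU, Pi.add_apply]
    rw [← submatrix, hrow, h2]
    simp only [Pi.sub_apply, Fin.cons_succ]
  refine ⟨by rw [hgw, mulVec_add]; abel, ?_⟩
  rw [sub_mulVec, one_mulVec, sub_right_comm, sub_sub, ← hgw, h2, sub_sub_cancel]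

/-- Let `T` be an `(n+1)×(n+1)` complex matrix with `I + T` invertible, and
define `u` and `U` by `[u U] = [0 Iₙ](I + T)⁻¹T`, i.e. `u` is the first column and `U` the
remaining `n×n` block of the matrix obtained by deleting the first row of `(I + T)⁻¹T`.
If `(0, g₁, ..., gₙ)' = T(1, a₁, ..., aₙ)'` and `g = ΓPh + σ - a`, then
`g = u + Uσ + UΓPh` and `a = (I - U)(ΓPh + σ) - u`. -/
theorem stmt16 (n : ℕ) (hn : 1 ≤ n)
    (T : Matrix (Fin (n + 1)) (Fin (n + 1)) ℂ) (hT : IsUnit (1 + T))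
    (u : Fin n → ℂ) (U : Matrix (Fin n) (Fin n) ℂ)
    (hu : u = fun i => ((1 + T)⁻¹ * T) i.succ 0)
    (hU : U = Matrix.of fun i j => ((1 + T)⁻¹ * T) i.succ j.succ)
    (σv a g : Fin n → ℂ) (P : Matrix (Fin n) (Fin n) ℂ)
    (h : Fin n → ℂ) (hh : h = fun i => if i.val = 0 then 1 else 0)
    (Γ : Matrix (Fin n) (Fin n) ℂ)
    (hΓ : Γ = (Matrix.of fun i j => if j.val = i.val + 1 then 1 else 0) -
      Matrix.vecMulVec σv h)
    (h1 : (Fin.cons 0 g : Fin (n + 1) → ℂ) = T.mulVec (Fin.cons 1 a))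
    (h2 : g = Γ.mulVec (P.mulVec h) + σv - a) :
    g = u + U.mulVec σv + U.mulVec (Γ.mulVec (P.mulVec h)) ∧
    a = (1 - U).mulVec (Γ.mulVec (P.mulVec h) + σv) - u :=
  stmt16_general n T hT u U hu hU σv a g P h Γ h1 h2
end
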